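/- Let u₁, u₂ be two solutions of problem (P3) with u₁(0) < u₂(0). Then the set {r ∈ (0,∞) : u₁(r) > u₂(r)} is nonempty; its infimum ρ satisfies ρ ∈ (0,∞), u₁(ρ) = u₂(ρ), u₁ < u₂ on (0,ρ), and (u₁/u₂)'(r) > 0 for all r ∈ (0,ρ). Moreover, if u₁ > u₂ on (ρ,∞), then (u₁/u₂)'(r) > 0 for all r ∈ (0,∞). -/

import Mathlib

open Real Filter Set MeasureTheory

noncomputable section

/-- Condition (V1): `V` is `C²` on `(0,∞)`, `r^{N-1}|V(r)|^q` is integrable near `0`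
for some `q > N`, and `liminf_{r→∞} V(r)/log r > 1 - N` (possibly `+∞`). -/
def CondV1 (N : ℕ) (V : ℝ → ℝ) : Prop :=
  ContDiffOn ℝ 2 V (Set.Ioi 0) ∧
  (∃ q : ℝ, (N : ℝ) < q ∧
    MeasureTheory.IntegrableOn (fun r : ℝ => r ^ (N - 1) * |V r| ^ q) (Set.Ioc 0 1)) ∧
  (∃ c : ℝ, 1 - (N : ℝ) < c ∧ ∀ᶠ r : ℝ in Filter.atTop, c ≤ V r / Real.log r)

/-- Condition (Vab): `a` is `C²` with compact support, `b` is `C³` with compact support,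
`b ≥ 0` and `b ≡ 1` in a neighborhood of `0`. -/
def CondVab (a b : ℝ → ℝ) : Prop :=
  ContDiff ℝ 2 a ∧ HasCompactSupport a ∧
  ContDiff ℝ 3 b ∧ HasCompactSupport b ∧
  (∀ r : ℝ, 0 ≤ b r) ∧ (∀ᶠ r in nhds (0 : ℝ), b r = 1)

/-- `θ ∈ Θ`: `θ ∈ (1-N, ∞)` and `liminf_{r→∞} (V(r) - θ log r) > -∞`. -/
def MemTheta (N : ℕ) (V : ℝ → ℝ) (θ : ℝ) : Prop :=
  1 - (N : ℝ) < θ ∧ ∃ M : ℝ, ∀ᶠ r : ℝ in Filter.atTop, M ≤ V r - θ * Real.log r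

/-- A solution of problem (P3): `u ∈ C([0,∞)) ∩ C²((0,∞))`, differentiable at `0` with
`u'(0) = 0`, satisfying `u'' + ((N-1)/r)u' - V_δ u + B_δ u log u² = 0` and `u > 0` on
`(0,∞)`, and `r^{-θ/2} u(r) → 0` as `r → ∞`. -/
def SolP3 (N : ℕ) (Vδ Bδ : ℝ → ℝ) (θ : ℝ) (u : ℝ → ℝ) : Prop :=
  ContinuousOn u (Set.Ici 0) ∧
  ContDiffOn ℝ 2 u (Set.Ioi 0) ∧
  (∀ r : ℝ, 0 < r →
    deriv (deriv u) r + ((N : ℝ) - 1) / r * deriv u r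
      - Vδ r * u r + Bδ r * (u r * Real.log (u r ^ 2)) = 0) ∧
  (∀ r : ℝ, 0 < r → 0 < u r) ∧
  HasDerivWithinAt u 0 (Set.Ici 0) 0 ∧
  Filter.Tendsto (fun r : ℝ => r ^ (-(θ / 2)) * u r) Filter.atTop (nhds 0)

/-!
Put `W = r^{N-1} (u₁' u₂ - u₁ u₂')`. Then `(u₁ / u₂)' = W / (r^{N-1} u₂²)` and, by the equation,
`W' = 2 r^{N-1} B_δ u₁ u₂ (log u₂ - log u₁)`: `W` increases where `u₁ < u₂` and decreases where
`u₁ > u₂`. Since `u₁ / u₂` is bounded near `0`, `W r ≥ 0` whenever `W` is nondecreasing on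
`(0, r]`; as `u₁ < u₂` near `0`, this makes `W > 0` up to the first crossing `ρ`, so `u₁ / u₂`
increases strictly on `(0, ρ]` up to its value `1` at `ρ`.

At infinity `θ ∈ Θ` and `r^{-θ/2} u → 0` give `V_δ - B_δ log u² ≥ 1`, i.e. `Δu ≥ u`, and comparison
with the supersolutions `A e^{-r/2} + ε e^{r/2}` yields `u ≤ A e^{-r/2}`. So `r^{N-1} u₂²` stays
bounded, and a Wronskian bounded away from `0` drives `u₁ / u₂` to `+∞` (or `u₂ / u₁`, for `-W`).
This excludes `u₁ ≤ u₂` everywhere, so the crossing exists, and, when `u₁ > u₂` beyond `ρ`, it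
excludes a sign change of the decreasing function `W` on `[ρ, ∞)`.
-/

open Topology

def radialLaplacian (N : ℕ) (u : ℝ → ℝ) (r : ℝ) : ℝ :=
  deriv (deriv u) r + ((N : ℝ) - 1) / r * deriv u r

def wronskian (N : ℕ) (u v : ℝ → ℝ) (r : ℝ) : ℝ :=
  r ^ (N - 1) * (deriv u r * v r - u r * deriv v r)

structure IsPosRadialSol (N : ℕ) (V B u : ℝ → ℝ) : Prop where
  contDiffOn : ContDiffOn ℝ 2 u (Ioi 0)
  pos : ∀ r, 0 < r → 0 < u r
  ode : ∀ r, 0 < r → radialLaplacian N u r = (V r - B r * log (u r ^ 2)) * u r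

lemma SolP3.isPosRadialSol {N : ℕ} {V B : ℝ → ℝ} {θ : ℝ} {u : ℝ → ℝ}
    (h : SolP3 N V B θ u) : IsPosRadialSol N V B u where
  contDiffOn := h.2.1
  pos := h.2.2.2.1
  ode r hr := by
    unfold radialLaplacian
    linear_combination h.2.2.1 r hr

lemma HasCompactSupport.eventually_atTop_eq_zero {f : ℝ → ℝ} (hf : HasCompactSupport f) :
    ∀ᶠ r in atTop, f r = 0 :=
  atTop_le_cocompact <| Filter.mem_of_superset hf.isCompact.compl_mem_cocompact
    fun _ => image_eq_zero_of_notMem_tsupport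

section Calculus

variable {u : ℝ → ℝ} {r : ℝ}

lemma hasDerivAt_of_contDiffOn_Ioi (hu : ContDiffOn ℝ 2 u (Ioi 0)) (hr : 0 < r) :
    HasDerivAt u (deriv u r) r :=
  ((hu.differentiableOn (by norm_num)).differentiableAt (Ioi_mem_nhds hr)).hasDerivAt

lemma hasDerivAt_deriv_of_contDiffOn_Ioi (hu : ContDiffOn ℝ 2 u (Ioi 0)) (hr : 0 < r) :
    HasDerivAt (deriv u) (deriv (deriv u) r) r :=
  (((hu.deriv_of_isOpen isOpen_Ioi (by norm_num : (1 : WithTop ℕ∞) + 1 ≤ 2)).differentiableOn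
    one_ne_zero).differentiableAt (Ioi_mem_nhds hr)).hasDerivAt

end Calculus

lemma hasDerivAt_wronskian {N : ℕ} (hN : 1 ≤ N) {u v : ℝ → ℝ} (hu : ContDiffOn ℝ 2 u (Ioi 0))
    (hv : ContDiffOn ℝ 2 v (Ioi 0)) {r : ℝ} (hr : 0 < r) :
    HasDerivAt (wronskian N u v)
      (r ^ (N - 1) * (radialLaplacian N u r * v r - u r * radialLaplacian N v r)) r := by
  have h := (hasDerivAt_pow (N - 1) r).mul
    (((hasDerivAt_deriv_of_contDiffOn_Ioi hu hr).mul (hasDerivAt_of_contDiffOn_Ioi hv hr)).sub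
      ((hasDerivAt_of_contDiffOn_Ioi hu hr).mul (hasDerivAt_deriv_of_contDiffOn_Ioi hv hr)))
  refine h.congr_deriv ?_
  unfold radialLaplacian
  obtain ⟨n, rfl⟩ : ∃ n, N = n + 1 := ⟨N - 1, by omega⟩
  simp only [Pi.mul_apply, Pi.sub_apply, Nat.add_sub_cancel, Nat.cast_add, Nat.cast_one,
    add_sub_cancel_right]
  rcases n with _ | n
  · simp only [Nat.cast_zero, pow_zero]
    ring
  · simp only [Nat.add_sub_cancel, pow_succ]
    field_simp
    ring

lemma hasDerivAt_div_of_wronskian (N : ℕ) {u v : ℝ → ℝ} (hu : ContDiffOn ℝ 2 u (Ioi 0))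
    (hv : ContDiffOn ℝ 2 v (Ioi 0)) {r : ℝ} (hr : 0 < r) (hv0 : v r ≠ 0) :
    HasDerivAt (fun s => u s / v s) (wronskian N u v r / (r ^ (N - 1) * v r ^ 2)) r := by
  refine ((hasDerivAt_of_contDiffOn_Ioi hu hr).div (hasDerivAt_of_contDiffOn_Ioi hv hr)
    hv0).congr_deriv ?_
  unfold wronskian
  have : r ^ (N - 1) ≠ 0 := pow_ne_zero _ hr.ne'
  field_simp

lemma wronskian_swap (N : ℕ) (u v : ℝ → ℝ) (r : ℝ) : wronskian N v u r = -wronskian N u v r := by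
  unfold wronskian
  ring

lemma deriv_div_pos_of_wronskian_pos {N : ℕ} {u v : ℝ → ℝ} (hu : ContDiffOn ℝ 2 u (Ioi 0))
    (hv : ContDiffOn ℝ 2 v (Ioi 0)) {r : ℝ} (hr : 0 < r) (hv₀ : 0 < v r)
    (hW : 0 < wronskian N u v r) : 0 < deriv (fun s => u s / v s) r := by
  rw [(hasDerivAt_div_of_wronskian N hu hv hr hv₀.ne').deriv]
  exact div_pos hW (mul_pos (pow_pos hr _) (pow_pos hv₀ 2))

lemma strictMonoOn_div_of_wronskian_pos {N : ℕ} {u v : ℝ → ℝ} (hu : ContDiffOn ℝ 2 u (Ioi 0))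
    (hv : ContDiffOn ℝ 2 v (Ioi 0)) (hvpos : ∀ r, 0 < r → 0 < v r) {s : Set ℝ}
    (hs : Convex ℝ s) (hs₀ : s ⊆ Ioi 0) (hW : ∀ r ∈ interior s, 0 < wronskian N u v r) :
    StrictMonoOn (fun r => u r / v r) s := by
  have hd : ∀ r ∈ s, HasDerivAt (fun r => u r / v r)
      (wronskian N u v r / (r ^ (N - 1) * v r ^ 2)) r :=
    fun r hr => hasDerivAt_div_of_wronskian N hu hv (hs₀ hr) (hvpos r (hs₀ hr)).ne'
  refine strictMonoOn_of_hasDerivWithinAt_pos hs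
    (fun r hr => (hd r hr).continuousAt.continuousWithinAt)
    (fun r hr => (hd r (interior_subset hr)).hasDerivWithinAt) fun r hr => ?_
  have hr₀ : 0 < r := hs₀ (interior_subset hr)
  exact div_pos (hW r hr) (mul_pos (pow_pos hr₀ _) (pow_pos (hvpos r hr₀) 2))

lemma tendsto_nhdsGT_zero_atTop_of_hasDerivAt_le {g g' : ℝ → ℝ} {c m : ℝ} (hc : 0 < c)
    (hm : 0 < m) (hd : ∀ r ∈ Ioc 0 m, HasDerivAt g (g' r) r)
    (hle : ∀ r ∈ Ioo 0 m, g' r ≤ -c / r) :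
    Tendsto g (𝓝[>] 0) atTop := by
  have hd' : ∀ r ∈ Ioc 0 m, HasDerivAt (fun s => g s + c * log s) (g' r + c * r⁻¹) r :=
    fun r hr => (hd r hr).add ((hasDerivAt_log hr.1.ne').const_mul c)
  have hanti : AntitoneOn (fun s => g s + c * log s) (Ioc 0 m) := by
    refine antitoneOn_of_hasDerivWithinAt_nonpos (convex_Ioc 0 m) (f' := fun r => g' r + c * r⁻¹)
      (fun r hr => (hd' r hr).continuousAt.continuousWithinAt) (fun r hr => ?_) fun r hr => ?_
    · rw [interior_Ioc] at hr
      exact (hd' r (Ioo_subset_Ioc_self hr)).hasDerivWithinAt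
    · rw [interior_Ioc] at hr
      linarith [hle r hr, neg_div r c, div_eq_mul_inv c r]
  have hlower : Tendsto (fun r => g m + c * log m + -c * log r) (𝓝[>] 0) atTop :=
    tendsto_atTop_add_const_left _ _
      (tendsto_log_nhdsGT_zero.const_mul_atBot_of_neg (neg_neg_of_pos hc))
  refine tendsto_atTop_mono' _ ?_ hlower
  filter_upwards [Ioc_mem_nhdsGT hm] with r hr
  linarith [hanti hr ⟨hm, le_rfl⟩ hr.2]

/-- Near `0` the quotient `u / v` stays bounded, while a negative value of a nondecreasing
Wronskian would force `(u / v)' ≤ -c / r` there. -/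
lemma wronskian_nonneg_of_monotoneOn {N : ℕ} (hN : 2 ≤ N) {u v : ℝ → ℝ}
    (huc : ContinuousOn u (Ici 0)) (hvc : ContinuousOn v (Ici 0))
    (hu : ContDiffOn ℝ 2 u (Ioi 0)) (hv : ContDiffOn ℝ 2 v (Ioi 0))
    (hvpos : ∀ r ∈ Ici 0, 0 < v r) {r₁ : ℝ} (hr₁ : 0 < r₁)
    (hmono : MonotoneOn (wronskian N u v) (Ioc 0 r₁)) : 0 ≤ wronskian N u v r₁ := by
  by_contra! hneg
  set m := min r₁ 1
  have hm : 0 < m := lt_min hr₁ one_pos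
  obtain ⟨C, hC⟩ := isCompact_Icc.exists_bound_of_continuousOn
    ((hvc.pow 2).mono (Icc_subset_Ici_self : Icc 0 m ⊆ Ici 0))
  have hvC : ∀ r ∈ Icc 0 m, v r ^ 2 ≤ C := fun r hr => (le_abs_self _).trans (hC r hr)
  have hC₀ : 0 < C := (pow_pos (hvpos 0 self_mem_Ici) 2).trans_le (hvC 0 ⟨le_rfl, hm.le⟩)
  have hdiv : Tendsto (fun r => u r / v r) (𝓝[>] 0) atTop := by
    refine tendsto_nhdsGT_zero_atTop_of_hasDerivAt_le (div_pos (neg_pos.2 hneg) hC₀) hm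
      (fun r hr => hasDerivAt_div_of_wronskian N hu hv hr.1 (hvpos r hr.1.le).ne') fun r hr => ?_
    have hr₁' : r ≤ r₁ := hr.2.le.trans (min_le_left _ _)
    have hW : wronskian N u v r ≤ wronskian N u v r₁ := hmono ⟨hr.1, hr₁'⟩ ⟨hr₁, le_rfl⟩ hr₁'
    have hpow : r ^ (N - 1) ≤ r :=
      pow_le_of_le_one hr.1.le (hr.2.le.trans (min_le_right _ _)) (by omega)
    have hden : 0 < r ^ (N - 1) * v r ^ 2 := mul_pos (pow_pos hr.1 _) (pow_pos (hvpos r hr.1.le) 2)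
    calc wronskian N u v r / (r ^ (N - 1) * v r ^ 2)
        ≤ wronskian N u v r₁ / (r ^ (N - 1) * v r ^ 2) := div_le_div_of_nonneg_right hW hden.le
      _ ≤ wronskian N u v r₁ / (r * C) := by
        rw [div_le_div_iff₀ hden (mul_pos hr.1 hC₀)]
        exact mul_le_mul_of_nonpos_left
          (mul_le_mul hpow (hvC r ⟨hr.1.le, hr.2.le⟩) (sq_nonneg _) hr.1.le) hneg.le
      _ = -(-wronskian N u v r₁ / C) / r := by field_simp
  have hcont : Tendsto (fun r => u r / v r) (𝓝[>] 0) (𝓝 (u 0 / v 0)) :=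
    ((huc.div hvc fun r hr => (hvpos r hr).ne') 0 self_mem_Ici).tendsto.mono_left
      (nhdsWithin_mono _ Ioi_subset_Ici_self)
  exact not_tendsto_atTop_of_tendsto_nhds hcont hdiv

lemma IsPosRadialSol.eventually_le_radialLaplacian {N : ℕ} {V B u : ℝ → ℝ} {θ : ℝ}
    (hu : IsPosRadialSol N V B u) (hB : ∀ᶠ r in atTop, B r = 1)
    (hθ : ∃ M, ∀ᶠ r in atTop, M ≤ V r - θ * log r)
    (hlim : Tendsto (fun r => r ^ (-(θ / 2)) * u r) atTop (𝓝 0)) :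
    ∀ᶠ r in atTop, u r ≤ radialLaplacian N u r := by
  obtain ⟨M, hM⟩ := hθ
  filter_upwards [hlim.eventually (gt_mem_nhds (exp_pos ((M - 1) / 2))), hM, hB,
    eventually_gt_atTop 0] with r hsmall hMr hBr hr
  have hur := hu.pos r hr
  have hlog : log (u r ^ 2) ≤ M - 1 + θ * log r := by
    have := (log_lt_iff_lt_exp (by positivity)).2 hsmall
    rw [log_mul (by positivity) hur.ne', log_rpow hr] at this
    rw [log_pow]
    push_cast
    linarith
  rw [hu.ode r hr, hBr]
  exact le_mul_of_one_le_left hur.le (by linarith)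

lemma IsLocalMax.hasDerivAt_deriv_nonpos {f f' : ℝ → ℝ} {x₀ c : ℝ} (h : IsLocalMax f x₀)
    (hf : ∀ᶠ x in 𝓝 x₀, HasDerivAt f (f' x) x) (hf' : HasDerivAt f' c x₀) : c ≤ 0 := by
  have hderiv : deriv f =ᶠ[𝓝 x₀] f' := hf.mono fun x hx => hx.deriv
  have hc : deriv (deriv f) x₀ = c := hderiv.deriv_eq.trans hf'.deriv
  by_contra! hpos
  have hmin : IsLocalMin f x₀ := isLocalMin_of_deriv_deriv_pos (hc ▸ hpos)
    (hderiv.eq_of_nhds.trans (h.hasDerivAt_eq_zero hf.self_of_nhds))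
    hf.self_of_nhds.continuousAt
  have hconst : f =ᶠ[𝓝 x₀] fun _ => f x₀ := by
    filter_upwards [h, hmin] with x h₁ h₂ using le_antisymm h₁ h₂
  have : deriv (deriv f) x₀ = 0 := by
    rw [hconst.deriv.deriv_eq]
    simp
  linarith

theorem maximum_principle_Ici {f f' f'' : ℝ → ℝ} {R : ℝ}
    (hf : ∀ x, R ≤ x → HasDerivAt f (f' x) x) (hf' : ∀ x, R < x → HasDerivAt f' (f'' x) x)
    (hR : f R ≤ 0) (htop : ∀ᶠ x in atTop, f x ≤ 0)
    (hpos : ∀ x, R < x → 0 < f x → f' x = 0 → 0 < f'' x) :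
    ∀ x, R ≤ x → f x ≤ 0 := by
  intro x₁ hx₁
  by_contra! hfx₁
  obtain ⟨T, hfT, hT⟩ := (htop.and (eventually_ge_atTop x₁)).exists
  obtain ⟨x₀, hx₀, hmax⟩ := isCompact_Icc.exists_isMaxOn (nonempty_Icc.2 (hx₁.trans hT))
    fun x hx => (hf x hx.1).continuousAt.continuousWithinAt
  have hfx₀ : 0 < f x₀ := hfx₁.trans_le (hmax ⟨hx₁, hT⟩)
  have hRx₀ : R < x₀ := lt_of_le_of_ne hx₀.1 (by rintro rfl; linarith)
  have hx₀T : x₀ < T := lt_of_le_of_ne hx₀.2 (by rintro rfl; linarith)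
  have hloc : IsLocalMax f x₀ := hmax.isLocalMax (Icc_mem_nhds hRx₀ hx₀T)
  have hderiv : ∀ᶠ x in 𝓝 x₀, HasDerivAt f (f' x) x :=
    Filter.mem_of_superset (Ioi_mem_nhds hRx₀) fun x hx => hf x (le_of_lt hx)
  exact (hloc.hasDerivAt_deriv_nonpos hderiv (hf' x₀ hRx₀)).not_gt
    (hpos x₀ hRx₀ hfx₀ (hloc.hasDerivAt_eq_zero (hf x₀ hx₀.1)))

/-- `A e^{-r/2} + ε e^{r/2}` is a supersolution of `Δw = w` once `(N - 1) / r ≤ 1 / 2`. -/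
lemma le_exp_add_exp_of_le_radialLaplacian {N : ℕ} {u : ℝ → ℝ} (hu : ContDiffOn ℝ 2 u (Ioi 0))
    {R A ε : ℝ} (hR : 2 * |(N : ℝ) - 1| < R) (hA : 0 ≤ A) (hε : 0 ≤ ε)
    (hΔ : ∀ x, R ≤ x → u x ≤ radialLaplacian N u x)
    (huR : u R ≤ A * exp (-(R / 2)) + ε * exp (R / 2))
    (htop : ∀ᶠ x in atTop, u x ≤ A * exp (-(x / 2)) + ε * exp (x / 2)) :
    ∀ x, R ≤ x → u x ≤ A * exp (-(x / 2)) + ε * exp (x / 2) := by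
  have hR₀ : 0 < R := lt_of_le_of_lt (by positivity) hR
  have hexp : ∀ x : ℝ, HasDerivAt (fun x => exp (x / 2)) (exp (x / 2) * (1 / 2)) x :=
    fun x => ((hasDerivAt_id' x).div_const 2).exp
  have hexp_neg : ∀ x : ℝ, HasDerivAt (fun x => exp (-(x / 2))) (exp (-(x / 2)) * -(1 / 2)) x :=
    fun x => ((hasDerivAt_id' x).div_const 2).neg.exp
  have key := maximum_principle_Ici (R := R)
    (f := fun x => u x - (A * exp (-(x / 2)) + ε * exp (x / 2)))
    (f' := fun x => deriv u x - (A * (exp (-(x / 2)) * -(1 / 2)) + ε * (exp (x / 2) * (1 / 2))))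
    (f'' := fun x => deriv (deriv u) x -
      (A * (exp (-(x / 2)) * -(1 / 2) * -(1 / 2)) + ε * (exp (x / 2) * (1 / 2) * (1 / 2))))
    (fun x hx => (hasDerivAt_of_contDiffOn_Ioi hu (hR₀.trans_le hx)).sub
      (((hexp_neg x).const_mul A).add ((hexp x).const_mul ε)))
    (fun x hx => (hasDerivAt_deriv_of_contDiffOn_Ioi hu (hR₀.trans hx)).sub
      ((((hexp_neg x).mul_const _).const_mul A).add (((hexp x).mul_const _).const_mul ε)))
    (by linarith) (htop.mono fun x hx => by linarith) ?_
  · exact fun x hx => by linarith [key x hx]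
  intro x hx hgt hcrit
  have hx₀ : 0 < x := hR₀.trans hx
  have hdu : deriv u x = -(A * exp (-(x / 2))) / 2 + ε * exp (x / 2) / 2 := by linarith
  have hΔx := hΔ x hx.le
  rw [radialLaplacian, hdu] at hΔx
  have hk : |((N : ℝ) - 1) / x| ≤ 1 / 2 := by
    rw [abs_div, abs_of_pos hx₀, div_le_iff₀ hx₀]
    linarith
  obtain ⟨hk₁, hk₂⟩ := abs_le.1 hk
  have ha : 0 ≤ A * exp (-(x / 2)) := by positivity
  have hb : 0 ≤ ε * exp (x / 2) := by positivity
  linarith [mul_nonneg (sub_nonneg.2 hk₂) hb, mul_nonneg (neg_le_iff_add_nonneg.1 hk₁) ha]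

lemma exists_le_mul_exp_neg_of_le_radialLaplacian {N : ℕ} {u : ℝ → ℝ} {θ : ℝ}
    (hu : ContDiffOn ℝ 2 u (Ioi 0)) (hΔ : ∀ᶠ r in atTop, u r ≤ radialLaplacian N u r)
    (hlim : Tendsto (fun r => r ^ (-(θ / 2)) * u r) atTop (𝓝 0)) :
    ∃ A, ∀ᶠ r in atTop, u r ≤ A * exp (-(r / 2)) := by
  have hsmall : Tendsto (fun r => u r * exp (-(r / 2))) atTop (𝓝 0) := by
    have h := hlim.mul (tendsto_rpow_mul_exp_neg_mul_atTop_nhds_zero (θ / 2) (1 / 2) one_half_pos)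
    rw [zero_mul] at h
    refine h.congr' ((eventually_gt_atTop 0).mono fun r hr => ?_)
    rw [rpow_neg hr.le]
    field_simp
  obtain ⟨R₀, hR₀⟩ := eventually_atTop.1 hΔ
  set R := max R₀ (2 * |(N : ℝ) - 1| + 1)
  set A := |u R| * exp (R / 2)
  refine ⟨A, eventually_atTop.2 ⟨R, fun x hx => le_of_forall_pos_le_add fun η hη => ?_⟩⟩
  have hε : 0 < η * exp (-(x / 2)) := by positivity
  have hcomp := le_exp_add_exp_of_le_radialLaplacian hu (A := A) (ε := η * exp (-(x / 2)))
    (by linarith [le_max_right R₀ (2 * |(N : ℝ) - 1| + 1)]) (by positivity) hε.le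
    (fun y hy => hR₀ y ((le_max_left _ _).trans hy)) ?_ ?_ x hx
  · have hη' : η * exp (-(x / 2)) * exp (x / 2) = η := by
      rw [mul_assoc, ← exp_add, neg_add_cancel, exp_zero, mul_one]
    linarith
  · have : A * exp (-(R / 2)) = |u R| := by
      rw [mul_assoc, ← exp_add, add_neg_cancel, exp_zero, mul_one]
    rw [this]
    linarith [le_abs_self (u R), (by positivity : 0 ≤ η * exp (-(x / 2)) * exp (R / 2))]
  · filter_upwards [hsmall.eventually (gt_mem_nhds hε)] with y hy
    have hinv : u y * exp (-(y / 2)) * exp (y / 2) = u y := by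
      rw [mul_assoc, ← exp_add, neg_add_cancel, exp_zero, mul_one]
    linarith [mul_lt_mul_of_pos_right hy (exp_pos (y / 2)),
      (by positivity : 0 ≤ A * exp (-(y / 2)))]

lemma SolP3.exists_le_mul_exp_neg {N : ℕ} {V a b u : ℝ → ℝ} {δ θ : ℝ}
    (ha : HasCompactSupport a) (hb : HasCompactSupport b) (hθ : MemTheta N V θ)
    (hu : SolP3 N (fun r => V r + δ * a r) (fun r => 1 + δ * b r) θ u) :
    ∃ A, ∀ᶠ r in atTop, u r ≤ A * exp (-(r / 2)) := by
  have hB : ∀ᶠ r in atTop, 1 + δ * b r = 1 :=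
    hb.eventually_atTop_eq_zero.mono fun r hr => by rw [hr, mul_zero, add_zero]
  have hVθ : ∃ M, ∀ᶠ r in atTop, M ≤ V r + δ * a r - θ * log r := by
    obtain ⟨M, hM⟩ := hθ.2
    exact ⟨M, (hM.and ha.eventually_atTop_eq_zero).mono fun r h => by rw [h.2]; linarith [h.1]⟩
  have hlim := hu.2.2.2.2.2
  exact exists_le_mul_exp_neg_of_le_radialLaplacian hu.2.1
    (hu.isPosRadialSol.eventually_le_radialLaplacian hB hVθ hlim) hlim

lemma tendsto_atTop_of_hasDerivAt_ge {g g' : ℝ → ℝ} {κ : ℝ} (hκ : 0 < κ)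
    (hd : ∀ᶠ r in atTop, HasDerivAt g (g' r) r ∧ κ ≤ g' r) : Tendsto g atTop atTop := by
  obtain ⟨R, hR⟩ := eventually_atTop.1 hd
  have hmono : MonotoneOn (fun r => g r - κ * r) (Ici R) := by
    refine monotoneOn_of_hasDerivWithinAt_nonneg (convex_Ici R) (f' := fun r => g' r - κ * 1)
      (fun r hr => ((hR r hr).1.sub (hasDerivAt_id' r |>.const_mul κ)).continuousAt
        |>.continuousWithinAt) (fun r hr => ?_) fun r hr => ?_
    · rw [interior_Ici] at hr
      exact ((hR r (le_of_lt hr)).1.sub ((hasDerivAt_id' r).const_mul κ)).hasDerivWithinAt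
    · rw [interior_Ici] at hr
      linarith [(hR r (le_of_lt hr)).2]
  have hlower : Tendsto (fun r => g R - κ * R + κ * r) atTop atTop :=
    tendsto_atTop_add_const_left _ _ (tendsto_id.const_mul_atTop hκ)
  refine tendsto_atTop_mono' _ ?_ hlower
  filter_upwards [eventually_ge_atTop R] with r hr
  linarith [hmono self_mem_Ici hr hr]

lemma tendsto_div_atTop_of_le_wronskian {N : ℕ} {u v : ℝ → ℝ} (hu : ContDiffOn ℝ 2 u (Ioi 0))
    (hv : ContDiffOn ℝ 2 v (Ioi 0)) (hvpos : ∀ r, 0 < r → 0 < v r) {A c : ℝ} (hc : 0 < c)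
    (hdecay : ∀ᶠ r in atTop, v r ≤ A * exp (-(r / 2)))
    (hW : ∀ᶠ r in atTop, c ≤ wronskian N u v r) :
    Tendsto (fun r => u r / v r) atTop atTop := by
  have hpow : ∀ᶠ r in atTop, r ^ (N - 1) * exp (-r) < 1 :=
    (tendsto_pow_mul_exp_neg_atTop_nhds_zero (N - 1)).eventually (gt_mem_nhds one_pos)
  refine tendsto_atTop_of_hasDerivAt_ge (g' := fun r => wronskian N u v r / (r ^ (N - 1) * v r ^ 2))
    (div_pos hc (by positivity : (0 : ℝ) < A ^ 2 + 1)) ?_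
  filter_upwards [hdecay, hW, hpow, eventually_gt_atTop 0] with r hdec hWr hpowr hr
  have hvr := hvpos r hr
  refine ⟨hasDerivAt_div_of_wronskian N hu hv hr hvr.ne', ?_⟩
  have hsq : v r ^ 2 ≤ A ^ 2 * exp (-r) := by
    calc v r ^ 2 ≤ (A * exp (-(r / 2))) ^ 2 := pow_le_pow_left₀ hvr.le hdec 2
      _ = A ^ 2 * exp (-r) := by rw [mul_pow, ← exp_nat_mul]; ring_nf
  have hden : r ^ (N - 1) * v r ^ 2 ≤ A ^ 2 + 1 := by
    calc r ^ (N - 1) * v r ^ 2 ≤ r ^ (N - 1) * (A ^ 2 * exp (-r)) :=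
          mul_le_mul_of_nonneg_left hsq (by positivity)
      _ = A ^ 2 * (r ^ (N - 1) * exp (-r)) := by ring
      _ ≤ A ^ 2 * 1 := mul_le_mul_of_nonneg_left hpowr.le (sq_nonneg A)
      _ ≤ A ^ 2 + 1 := by linarith
  exact div_le_div₀ (hc.le.trans hWr) hWr (by positivity) hden

lemma exists_pos_forall_lt_of_continuousOn {u v : ℝ → ℝ} (hu : ContinuousOn u (Ici 0))
    (hv : ContinuousOn v (Ici 0)) (h0 : u 0 < v 0) : ∃ ε > 0, ∀ r ∈ Ico 0 ε, u r < v r :=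
  mem_nhdsGE_iff_exists_Ico_subset.1 ((hu 0 self_mem_Ici).eventually_lt (hv 0 self_mem_Ici) h0)

lemma sInf_crossing_spec {u v : ℝ → ℝ} (hu : ContinuousOn u (Ici 0)) (hv : ContinuousOn v (Ici 0))
    (h0 : u 0 < v 0) (hS : {r | 0 < r ∧ v r < u r}.Nonempty) :
    0 < sInf {r | 0 < r ∧ v r < u r} ∧
      u (sInf {r | 0 < r ∧ v r < u r}) = v (sInf {r | 0 < r ∧ v r < u r}) ∧
      ∀ r ∈ Ioo 0 (sInf {r | 0 < r ∧ v r < u r}), u r ≤ v r := by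
  set S := {r | 0 < r ∧ v r < u r}
  have hbdd : BddBelow S := ⟨0, fun r hr => hr.1.le⟩
  obtain ⟨ε, hε, hlt⟩ := exists_pos_forall_lt_of_continuousOn hu hv h0
  have hρ : 0 < sInf S :=
    hε.trans_le (le_csInf hS fun r hr => not_lt.1 fun h => lt_asymm hr.2 (hlt r ⟨hr.1.le, h⟩))
  have hle : ∀ r ∈ Ioo 0 (sInf S), u r ≤ v r :=
    fun r hr => not_lt.1 fun h => (csInf_le hbdd ⟨hr.1, h⟩).not_gt hr.2
  have hcont : Tendsto (fun x => u x - v x) (𝓝 (sInf S)) (𝓝 (u (sInf S) - v (sInf S))) :=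
    ((hu.sub hv).continuousAt (Ici_mem_nhds hρ)).tendsto
  have hleft : u (sInf S) - v (sInf S) ≤ 0 := by
    refine le_of_tendsto (hcont.mono_left (nhdsWithin_le_nhds (s := Iio (sInf S)))) ?_
    filter_upwards [Ioo_mem_nhdsLT hρ] with x hx
    linarith [hle x hx]
  have hright : 0 ≤ u (sInf S) - v (sInf S) := by
    have : (𝓝[S] sInf S).NeBot := mem_closure_iff_nhdsWithin_neBot.1 (csInf_mem_closure hS hbdd)
    refine ge_of_tendsto (hcont.mono_left (nhdsWithin_le_nhds (s := S))) ?_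
    filter_upwards [self_mem_nhdsWithin] with x hx
    linarith [hx.2]
  exact ⟨hρ, by linarith, hle⟩

section TwoSolutions

variable {N : ℕ} {V B u₁ u₂ : ℝ → ℝ}

lemma IsPosRadialSol.hasDerivAt_wronskian (hN : 1 ≤ N) (h₁ : IsPosRadialSol N V B u₁)
    (h₂ : IsPosRadialSol N V B u₂) {r : ℝ} (hr : 0 < r) :
    HasDerivAt (wronskian N u₁ u₂)
      (r ^ (N - 1) * (2 * B r * u₁ r * u₂ r) * (log (u₂ r) - log (u₁ r))) r := by
  refine (_root_.hasDerivAt_wronskian hN h₁.contDiffOn h₂.contDiffOn hr).congr_deriv ?_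
  rw [h₁.ode r hr, h₂.ode r hr, Real.log_pow, Real.log_pow]
  push_cast
  ring

lemma IsPosRadialSol.wronskian_monotoneOn (hN : 1 ≤ N) (hB : ∀ r, 0 < r → 0 < B r)
    (h₁ : IsPosRadialSol N V B u₁) (h₂ : IsPosRadialSol N V B u₂) {s : Set ℝ} (hs : Convex ℝ s)
    (hs₀ : s ⊆ Ioi 0) (hle : ∀ r ∈ interior s, u₁ r ≤ u₂ r) :
    MonotoneOn (wronskian N u₁ u₂) s := by
  refine monotoneOn_of_hasDerivWithinAt_nonneg hs
    (fun r hr => (h₁.hasDerivAt_wronskian hN h₂ (hs₀ hr)).continuousAt.continuousWithinAt)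
    (fun r hr => (h₁.hasDerivAt_wronskian hN h₂ (hs₀ (interior_subset hr))).hasDerivWithinAt)
    fun r hr => ?_
  have hr₀ : 0 < r := hs₀ (interior_subset hr)
  have hu₁r := h₁.pos r hr₀
  have hu₂r := h₂.pos r hr₀
  have hBr := hB r hr₀
  exact mul_nonneg (by positivity) (sub_nonneg.2 (log_le_log hu₁r (hle r hr)))

lemma IsPosRadialSol.wronskian_strictMonoOn (hN : 1 ≤ N) (hB : ∀ r, 0 < r → 0 < B r)
    (h₁ : IsPosRadialSol N V B u₁) (h₂ : IsPosRadialSol N V B u₂) {s : Set ℝ} (hs : Convex ℝ s)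
    (hs₀ : s ⊆ Ioi 0) (hlt : ∀ r ∈ interior s, u₁ r < u₂ r) :
    StrictMonoOn (wronskian N u₁ u₂) s := by
  refine strictMonoOn_of_hasDerivWithinAt_pos hs
    (fun r hr => (h₁.hasDerivAt_wronskian hN h₂ (hs₀ hr)).continuousAt.continuousWithinAt)
    (fun r hr => (h₁.hasDerivAt_wronskian hN h₂ (hs₀ (interior_subset hr))).hasDerivWithinAt)
    fun r hr => ?_
  have hr₀ : 0 < r := hs₀ (interior_subset hr)
  have hu₁r := h₁.pos r hr₀
  have hu₂r := h₂.pos r hr₀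
  have hBr := hB r hr₀
  exact mul_pos (by positivity) (sub_pos.2 (log_lt_log hu₁r (hlt r hr)))

lemma IsPosRadialSol.wronskian_strictAntiOn (hN : 1 ≤ N) (hB : ∀ r, 0 < r → 0 < B r)
    (h₁ : IsPosRadialSol N V B u₁) (h₂ : IsPosRadialSol N V B u₂) {s : Set ℝ} (hs : Convex ℝ s)
    (hs₀ : s ⊆ Ioi 0) (hgt : ∀ r ∈ interior s, u₂ r < u₁ r) :
    StrictAntiOn (wronskian N u₁ u₂) s := by
  simpa only [wronskian_swap N u₁ u₂, neg_neg] using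
    (h₂.wronskian_strictMonoOn hN hB h₁ hs hs₀ hgt).neg

lemma IsPosRadialSol.wronskian_pos_of_le (hN : 2 ≤ N) (hB : ∀ r, 0 < r → 0 < B r)
    (h₁ : IsPosRadialSol N V B u₁) (h₂ : IsPosRadialSol N V B u₂)
    (hc₁ : ContinuousOn u₁ (Ici 0)) (hc₂ : ContinuousOn u₂ (Ici 0)) (h0 : u₁ 0 < u₂ 0)
    {ρ : ℝ} (hle : ∀ r ∈ Ioo 0 ρ, u₁ r ≤ u₂ r) : ∀ r ∈ Ioc 0 ρ, 0 < wronskian N u₁ u₂ r := by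
  have hu₁0 : 0 ≤ u₁ 0 :=
    ge_of_tendsto ((hc₁ 0 self_mem_Ici).tendsto.mono_left (nhdsWithin_mono _ Ioi_subset_Ici_self))
      (eventually_mem_nhdsWithin.mono fun x hx => (h₁.pos x hx).le)
  have hpos₂ : ∀ r ∈ Ici 0, 0 < u₂ r := by
    rintro r (hr : 0 ≤ r)
    rcases hr.eq_or_lt with rfl | hr
    exacts [hu₁0.trans_lt h0, h₂.pos r hr]
  obtain ⟨ε, hε, hlt⟩ := exists_pos_forall_lt_of_continuousOn hc₁ hc₂ h0
  have hmono : MonotoneOn (wronskian N u₁ u₂) (Ioc 0 ρ) :=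
    h₁.wronskian_monotoneOn (by omega) hB h₂ (convex_Ioc 0 ρ) Ioc_subset_Ioi_self
      (by rwa [interior_Ioc])
  intro r hr
  set s := min r ε
  have hs : 0 < s := lt_min hr.1 hε
  have hstrict : StrictMonoOn (wronskian N u₁ u₂) (Ioc 0 s) :=
    h₁.wronskian_strictMonoOn (by omega) hB h₂ (convex_Ioc 0 s) Ioc_subset_Ioi_self
      (by
        rw [interior_Ioc]
        exact fun x hx => hlt x ⟨hx.1.le, hx.2.trans_le (min_le_right _ _)⟩)
  have hsr : s ≤ r := min_le_left _ _
  have hsub : Ioc 0 (s / 2) ⊆ Ioc 0 ρ := Ioc_subset_Ioc_right (by linarith [hr.2])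
  have hnonneg := wronskian_nonneg_of_monotoneOn hN hc₁ hc₂ h₁.contDiffOn h₂.contDiffOn hpos₂
    (half_pos hs) (hmono.mono hsub)
  calc 0 ≤ wronskian N u₁ u₂ (s / 2) := hnonneg
    _ < wronskian N u₁ u₂ s := hstrict ⟨half_pos hs, by linarith⟩ ⟨hs, le_rfl⟩ (half_lt_self hs)
    _ ≤ wronskian N u₁ u₂ r := hmono ⟨hs, hsr.trans hr.2⟩ hr hsr

lemma IsPosRadialSol.nonempty_crossing (hN : 2 ≤ N) (hB : ∀ r, 0 < r → 0 < B r)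
    (h₁ : IsPosRadialSol N V B u₁) (h₂ : IsPosRadialSol N V B u₂)
    (hc₁ : ContinuousOn u₁ (Ici 0)) (hc₂ : ContinuousOn u₂ (Ici 0)) (h0 : u₁ 0 < u₂ 0)
    {A : ℝ} (hdecay₂ : ∀ᶠ r in atTop, u₂ r ≤ A * exp (-(r / 2))) :
    {r | 0 < r ∧ u₂ r < u₁ r}.Nonempty := by
  by_contra hempty
  have hle : ∀ r, 0 < r → u₁ r ≤ u₂ r := fun r hr => not_lt.1 fun h => hempty ⟨r, hr, h⟩
  have hW₁ : 0 < wronskian N u₁ u₂ 1 :=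
    h₁.wronskian_pos_of_le hN hB h₂ hc₁ hc₂ h0 (fun r hr => hle r hr.1) 1 ⟨one_pos, le_rfl⟩
  have hmono : MonotoneOn (wronskian N u₁ u₂) (Ioi 0) :=
    h₁.wronskian_monotoneOn (by omega) hB h₂ (convex_Ioi 0) subset_rfl
      (by rw [interior_Ioi]; exact hle)
  have hratio := tendsto_div_atTop_of_le_wronskian h₁.contDiffOn h₂.contDiffOn h₂.pos hW₁ hdecay₂
    ((eventually_ge_atTop 1).mono fun r hr => hmono (mem_Ioi.2 one_pos) (one_pos.trans_le hr) hr)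
  obtain ⟨r, hr, hr₁⟩ := ((hratio.eventually_gt_atTop 1).and (eventually_gt_atTop 0)).exists
  exact (hle r hr₁).not_gt ((one_lt_div (h₂.pos r hr₁)).1 hr)

lemma IsPosRadialSol.wronskian_pos_of_gt (hN : 1 ≤ N) (hB : ∀ r, 0 < r → 0 < B r)
    (h₁ : IsPosRadialSol N V B u₁) (h₂ : IsPosRadialSol N V B u₂) {A : ℝ}
    (hdecay₁ : ∀ᶠ r in atTop, u₁ r ≤ A * exp (-(r / 2))) {ρ : ℝ} (hρ : 0 < ρ)
    (hgt : ∀ r, ρ < r → u₂ r < u₁ r) :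
    ∀ r, ρ ≤ r → 0 < wronskian N u₁ u₂ r := by
  have hanti : StrictAntiOn (wronskian N u₁ u₂) (Ici ρ) :=
    h₁.wronskian_strictAntiOn hN hB h₂ (convex_Ici ρ) (Ici_subset_Ioi.2 hρ)
      (by rw [interior_Ici]; exact hgt)
  by_contra! hneg
  obtain ⟨r₃, hr₃, hW₃⟩ := hneg
  have hc : 0 < -wronskian N u₁ u₂ (r₃ + 1) := by
    linarith [hanti hr₃ (show ρ ≤ r₃ + 1 by linarith) (lt_add_one r₃)]
  have hW : ∀ᶠ r in atTop, -wronskian N u₁ u₂ (r₃ + 1) ≤ wronskian N u₂ u₁ r := by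
    filter_upwards [eventually_ge_atTop (r₃ + 1)] with r hr
    rw [wronskian_swap N u₁ u₂ r, neg_le_neg_iff]
    exact hanti.antitoneOn (show ρ ≤ r₃ + 1 by linarith) (show ρ ≤ r by linarith) hr
  have hratio := tendsto_div_atTop_of_le_wronskian h₂.contDiffOn h₁.contDiffOn h₁.pos hc hdecay₁ hW
  obtain ⟨r, hr, hrρ⟩ := ((hratio.eventually_gt_atTop 1).and (eventually_gt_atTop ρ)).exists
  exact (hgt r hrρ).not_gt ((one_lt_div (h₁.pos r (hρ.trans hrρ))).1 hr)

end TwoSolutions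

theorem intersection_structure_general (N : ℕ) (hN : 2 ≤ N) (V a b : ℝ → ℝ) (δ θ : ℝ)
    (hVab : CondVab a b) (hδ : 0 ≤ δ) (hθ : MemTheta N V θ)
    (u₁ u₂ : ℝ → ℝ)
    (hu₁ : SolP3 N (fun r => V r + δ * a r) (fun r => 1 + δ * b r) θ u₁)
    (hu₂ : SolP3 N (fun r => V r + δ * a r) (fun r => 1 + δ * b r) θ u₂)
    (h0 : u₁ 0 < u₂ 0) :
    {r : ℝ | 0 < r ∧ u₂ r < u₁ r}.Nonempty ∧
    0 < sInf {r : ℝ | 0 < r ∧ u₂ r < u₁ r} ∧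
    u₁ (sInf {r : ℝ | 0 < r ∧ u₂ r < u₁ r}) = u₂ (sInf {r : ℝ | 0 < r ∧ u₂ r < u₁ r}) ∧
    (∀ r : ℝ, 0 < r → r < sInf {r : ℝ | 0 < r ∧ u₂ r < u₁ r} → u₁ r < u₂ r) ∧
    (∀ r : ℝ, 0 < r → r < sInf {r : ℝ | 0 < r ∧ u₂ r < u₁ r} →
      0 < deriv (fun s => u₁ s / u₂ s) r) ∧
    ((∀ r : ℝ, sInf {r : ℝ | 0 < r ∧ u₂ r < u₁ r} < r → u₂ r < u₁ r) →
      ∀ r : ℝ, 0 < r → 0 < deriv (fun s => u₁ s / u₂ s) r) := by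
  obtain ⟨-, ha, -, hb, hb₀, -⟩ := hVab
  have hB : ∀ r, 0 < r → 0 < 1 + δ * b r :=
    fun r _ => add_pos_of_pos_of_nonneg one_pos (mul_nonneg hδ (hb₀ r))
  have hs₁ := hu₁.isPosRadialSol
  have hs₂ := hu₂.isPosRadialSol
  obtain ⟨A₁, hA₁⟩ := hu₁.exists_le_mul_exp_neg ha hb hθ
  obtain ⟨A₂, hA₂⟩ := hu₂.exists_le_mul_exp_neg ha hb hθ
  have hS := hs₁.nonempty_crossing hN hB hs₂ hu₁.1 hu₂.1 h0 hA₂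
  obtain ⟨hρ, heq, hle⟩ := sInf_crossing_spec hu₁.1 hu₂.1 h0 hS
  set ρ := sInf {r : ℝ | 0 < r ∧ u₂ r < u₁ r}
  have hW := hs₁.wronskian_pos_of_le hN hB hs₂ hu₁.1 hu₂.1 h0 hle
  have hderiv : ∀ r, 0 < r → 0 < wronskian N u₁ u₂ r → 0 < deriv (fun s => u₁ s / u₂ s) r :=
    fun r hr => deriv_div_pos_of_wronskian_pos hs₁.contDiffOn hs₂.contDiffOn hr (hs₂.pos r hr)
  refine ⟨hS, hρ, heq, fun r hr hrρ => ?_, fun r hr hrρ => hderiv r hr (hW r ⟨hr, hrρ.le⟩),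
    fun hgt r hr => hderiv r hr ?_⟩
  · have hmono := strictMonoOn_div_of_wronskian_pos hs₁.contDiffOn hs₂.contDiffOn hs₂.pos
      (convex_Ioc 0 ρ) Ioc_subset_Ioi_self fun r hr => hW r (interior_subset hr)
    have hlt := hmono ⟨hr, hrρ.le⟩ ⟨hρ, le_rfl⟩ hrρ
    dsimp only at hlt
    rwa [heq, div_self (hs₂.pos ρ hρ).ne', div_lt_one (hs₂.pos r hr)] at hlt
  · rcases lt_or_ge r ρ with hrρ | hρr
    · exact hW r ⟨hr, hrρ.le⟩
    · exact hs₁.wronskian_pos_of_gt (by omega) hB hs₂ hA₁ hρ hgt r hρr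

/-- Let `u₁, u₂` be two solutions of (P3) with `u₁(0) < u₂(0)`. Then the set
`{r > 0 : u₁(r) > u₂(r)}` is nonempty; its infimum `ρ` is positive, `u₁(ρ) = u₂(ρ)`,
`u₁ < u₂` on `(0,ρ)` and `(u₁/u₂)' > 0` on `(0,ρ)`. Moreover, if `u₁ > u₂` on `(ρ,∞)`,
then `(u₁/u₂)' > 0` on all of `(0,∞)`. -/
theorem intersection_structure (N : ℕ) (hN : 2 ≤ N) (V a b : ℝ → ℝ) (δ θ : ℝ)
    (hV1 : CondV1 N V) (hVab : CondVab a b) (hδ : 0 ≤ δ) (hθ : MemTheta N V θ)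
    (u₁ u₂ : ℝ → ℝ)
    (hu₁ : SolP3 N (fun r => V r + δ * a r) (fun r => 1 + δ * b r) θ u₁)
    (hu₂ : SolP3 N (fun r => V r + δ * a r) (fun r => 1 + δ * b r) θ u₂)
    (h0 : u₁ 0 < u₂ 0) :
    {r : ℝ | 0 < r ∧ u₂ r < u₁ r}.Nonempty ∧
    0 < sInf {r : ℝ | 0 < r ∧ u₂ r < u₁ r} ∧
    u₁ (sInf {r : ℝ | 0 < r ∧ u₂ r < u₁ r}) = u₂ (sInf {r : ℝ | 0 < r ∧ u₂ r < u₁ r}) ∧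
    (∀ r : ℝ, 0 < r → r < sInf {r : ℝ | 0 < r ∧ u₂ r < u₁ r} → u₁ r < u₂ r) ∧
    (∀ r : ℝ, 0 < r → r < sInf {r : ℝ | 0 < r ∧ u₂ r < u₁ r} →
      0 < deriv (fun s => u₁ s / u₂ s) r) ∧
    ((∀ r : ℝ, sInf {r : ℝ | 0 < r ∧ u₂ r < u₁ r} < r → u₂ r < u₁ r) →
      ∀ r : ℝ, 0 < r → 0 < deriv (fun s => u₁ s / u₂ s) r) :=
  intersection_structure_general N hN V a b δ θ hVab hδ hθ u₁ u₂ hu₁ hu₂ h0
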